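/- Let {f_i}_{i∈I} be a Riesz basis for H. Then a family {ω_j}_{j∈I} in H is an R-dual of type IV of {f_i} (with respect to some pair of Riesz bases {e_j}, {h_i} for H) if and only if {ω_j} is a Riesz basis for H. -/

import Mathlib

open scoped ComplexInnerProductSpace

noncomputable section

section Defs

variable {H : Type*} [NormedAddCommGroup H] [InnerProductSpace ℂ H]
variable {I : Type*}

/-- `A` is a lower frame bound for the family `f`. -/
def FrameLower (f : I → H) (A : ℝ) : Prop :=
  ∀ (x : H) (s : ℝ), HasSum (fun i => ‖⟪x, f i⟫‖ ^ 2) s → A * ‖x‖ ^ 2 ≤ s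

/-- `B` is an upper frame bound for the family `f` (including summability). -/
def FrameUpper (f : I → H) (B : ℝ) : Prop :=
  ∀ x : H, ∃ s : ℝ, HasSum (fun i => ‖⟪x, f i⟫‖ ^ 2) s ∧ s ≤ B * ‖x‖ ^ 2

/-- `f` is a frame with bounds `A`, `B`. -/
def IsFrameWith (f : I → H) (A B : ℝ) : Prop :=
  0 < A ∧ A ≤ B ∧ FrameLower f A ∧ FrameUpper f B

/-- `A`, `B` are the optimal frame bounds of `f`. -/
def OptimalFrameBounds (f : I → H) (A B : ℝ) : Prop :=
  IsFrameWith f A B ∧ (∀ A' : ℝ, FrameLower f A' → A' ≤ A) ∧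
    ∀ B' : ℝ, FrameUpper f B' → B ≤ B'

/-- `A` is a lower Riesz-sequence bound for `ω`. -/
def RieszLower (ω : I → H) (A : ℝ) : Prop :=
  ∀ c : I →₀ ℂ, A * ∑ i ∈ c.support, ‖c i‖ ^ 2 ≤ ‖∑ i ∈ c.support, c i • ω i‖ ^ 2

/-- `B` is an upper Riesz-sequence bound for `ω`. -/
def RieszUpper (ω : I → H) (B : ℝ) : Prop :=
  ∀ c : I →₀ ℂ, ‖∑ i ∈ c.support, c i • ω i‖ ^ 2 ≤ B * ∑ i ∈ c.support, ‖c i‖ ^ 2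

/-- `ω` is a Riesz sequence with bounds `A`, `B`. -/
def IsRieszSeqWith (ω : I → H) (A B : ℝ) : Prop :=
  0 < A ∧ A ≤ B ∧ RieszLower ω A ∧ RieszUpper ω B

/-- `A`, `B` are the optimal Riesz-sequence bounds of `ω`. -/
def OptimalRieszBounds (ω : I → H) (A B : ℝ) : Prop :=
  IsRieszSeqWith ω A B ∧ (∀ A' : ℝ, RieszLower ω A' → A' ≤ A) ∧
    ∀ B' : ℝ, RieszUpper ω B' → B ≤ B'

/-- `ω` is a Riesz basis for `H`: a Riesz sequence whose closed linear span is all of `H`. -/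
def IsRieszBasisFor (ω : I → H) : Prop :=
  (∃ A B : ℝ, IsRieszSeqWith ω A B) ∧
    (Submodule.span ℂ (Set.range ω)).topologicalClosure = ⊤

/-- `R` is a (self-adjoint, positive) square root of `T`. -/
def IsPosSqrtOf (R T : H →L[ℂ] H) : Prop :=
  (∀ x y : H, ⟪R x, y⟫ = ⟪x, R y⟫) ∧ (∀ x : H, 0 ≤ (⟪R x, x⟫).re) ∧ R ∘L R = T

/-- `S` and `T` are mutually inverse operators. -/
def AreInverse (S T : H →L[ℂ] H) : Prop :=
  S ∘L T = ContinuousLinearMap.id ℂ H ∧ T ∘L S = ContinuousLinearMap.id ℂ H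

/-- Property (★): for every `d ∈ ℓ²(I)` whose coordinatewise conjugate lies in the range of
the analysis operator (encoded by the predicate `rangeU`), one has
`(1/√nSinv)·‖d‖ ≤ ‖Q (∑ dᵢ hbᵢ)‖ ≤ √nS·‖d‖`, and the constants `1/√nSinv`, `√nS`
are optimal. -/
def PropertyStar (rangeU : (I → ℂ) → Prop) (hb : HilbertBasis I ℂ H)
    (Q : H →L[ℂ] H) (nS nSinv : ℝ) : Prop :=
  (∀ (d : I → ℂ) (v : H), HasSum (fun i => d i • (hb i : H)) v → rangeU d →
      (1 / Real.sqrt nSinv) * Real.sqrt (∑' i, ‖d i‖ ^ 2) ≤ ‖Q v‖ ∧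
        ‖Q v‖ ≤ Real.sqrt nS * Real.sqrt (∑' i, ‖d i‖ ^ 2)) ∧
  (∀ B' : ℝ,
      (∀ (d : I → ℂ) (v : H), HasSum (fun i => d i • (hb i : H)) v → rangeU d →
        ‖Q v‖ ≤ B' * Real.sqrt (∑' i, ‖d i‖ ^ 2)) →
      Real.sqrt nS ≤ B') ∧
  (∀ A' : ℝ,
      (∀ (d : I → ℂ) (v : H), HasSum (fun i => d i • (hb i : H)) v → rangeU d →
        A' * Real.sqrt (∑' i, ‖d i‖ ^ 2) ≤ ‖Q v‖) →
      A' ≤ 1 / Real.sqrt nSinv)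

/-- `ω` is the R-dual of type III determined by the data `(g, e, hb, Q)`, where `g i`
stands for `S^{-1/2} f i`:  `ω j = ∑ᵢ ⟪S^{-1/2} fᵢ, eⱼ⟫ • Q hbᵢ`. -/
def IsRDualIIIOf (g : I → H) (e hb : HilbertBasis I ℂ H) (Q : H →L[ℂ] H) (ω : I → H) : Prop :=
  ∀ j, HasSum (fun i => ⟪g i, e j⟫ • Q (hb i : H)) (ω j)

end Defs

/-! A family is a Riesz basis exactly when it is the image `T δᵢ` of the standard basis of
`ℓ²(I)` under an isomorphism `T : ℓ²(I) ≃ H`, namely its synthesis operator `x ↦ ∑ xᵢ fᵢ`.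
If `F` is the synthesis operator of `f`, then `⟪fᵢ, y⟫` is the `i`-th coordinate of `F* y`, so
for Riesz bases `e = E δ` and `h = V δ` the R-dual is `ωⱼ = V (F* (E δⱼ))`: an isomorphism
applied to `δⱼ`. Conversely, the dual basis `eⱼ = (F*)⁻¹ δⱼ` satisfies `⟪fᵢ, eⱼ⟫ = δᵢⱼ`, so
every Riesz basis `ω` is the R-dual of `f` with respect to `(e, ω)`. -/

open scoped lp

theorem AntilipschitzWith.surjective_of_denseRange {α β : Type*} [PseudoEMetricSpace α]
    [EMetricSpace β] [CompleteSpace α] {K : NNReal} {f : α → β} (hf : AntilipschitzWith K f)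
    (hfc : UniformContinuous f) (hd : DenseRange f) : Function.Surjective f := by
  rw [← Set.range_eq_univ, ← hd.closure_range, (hf.isClosed_range hfc).closure_eq]

section Adjoint

variable {𝕜 E F : Type*} [RCLike 𝕜]
  [NormedAddCommGroup E] [InnerProductSpace 𝕜 E] [CompleteSpace E]
  [NormedAddCommGroup F] [InnerProductSpace 𝕜 F] [CompleteSpace F]

def ContinuousLinearEquiv.adjoint (T : E ≃L[𝕜] F) : F ≃L[𝕜] E :=
  ContinuousLinearEquiv.equivOfInverse
    (ContinuousLinearMap.adjoint (T : E →L[𝕜] F))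
    (ContinuousLinearMap.adjoint (T.symm : F →L[𝕜] E))
    (fun y => by
      rw [← ContinuousLinearMap.comp_apply, ← ContinuousLinearMap.adjoint_comp,
        ContinuousLinearEquiv.coe_comp_coe_symm, ContinuousLinearMap.adjoint_id]
      rfl)
    (fun x => by
      rw [← ContinuousLinearMap.comp_apply, ← ContinuousLinearMap.adjoint_comp,
        ContinuousLinearEquiv.coe_symm_comp_coe, ContinuousLinearMap.adjoint_id]
      rfl)

end Adjoint

section SequenceSpace

variable {𝕜 E : Type*} [RCLike 𝕜] {I : Type*} [DecidableEq I]

theorem hasSum_lp_single_one_smul [NormedAddCommGroup E] [NormedSpace 𝕜 E] (f : I → E) (i : I) :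
    HasSum (fun j => (lp.single 2 i (1 : 𝕜) : ℓ²(I, 𝕜)) j • f j) (f i) := by
  convert hasSum_single (f := fun j => (lp.single 2 i (1 : 𝕜) : ℓ²(I, 𝕜)) j • f j) i
    fun j hj => ?_
  · simp
  · simp [hj]

theorem lp.dense_span_single :
    Dense (Submodule.span 𝕜 (Set.range fun i => (lp.single 2 i 1 : ℓ²(I, 𝕜))) : Set ℓ²(I, 𝕜)) := by
  refine fun x => mem_closure_of_tendsto (lp.hasSum_single (by norm_num) x)
    (.of_forall fun s => Submodule.sum_mem _ fun i _ => ?_)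
  convert Submodule.smul_mem _ (x i) (Submodule.subset_span (R := 𝕜)
    (Set.mem_range_self (f := fun i => (lp.single 2 i 1 : ℓ²(I, 𝕜))) i)) using 1
  rw [← lp.single_smul, smul_eq_mul, mul_one]

variable [NormedAddCommGroup E] [InnerProductSpace 𝕜 E] [CompleteSpace E]

theorem adjoint_apply_apply_of_hasSum {T : ℓ²(I, 𝕜) →L[𝕜] E} {f : I → E}
    (hT : ∀ x, HasSum (fun i => x i • f i) (T x)) (y : E) (i : I) :
    ContinuousLinearMap.adjoint T y i = inner 𝕜 (f i) y := by
  have hTi : T (lp.single 2 i 1) = f i := (hT _).unique (hasSum_lp_single_one_smul f i)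
  rw [← hTi, ← ContinuousLinearMap.adjoint_inner_right, lp.inner_single_left, RCLike.inner_apply',
    map_one, one_mul]

end SequenceSpace

theorem lp.hasSum_norm_sq {I : Type*} {E : I → Type*} [∀ i, NormedAddCommGroup (E i)]
    (x : lp E 2) : HasSum (fun i => ‖x i‖ ^ 2) (‖x‖ ^ 2) := by
  have h := lp.hasSum_norm (p := 2) (by norm_num) x
  simp only [ENNReal.toReal_ofNat, Real.rpow_ofNat] at h
  exact h

section Riesz

variable {H : Type*} [NormedAddCommGroup H] [InnerProductSpace ℂ H]
  {I : Type*} {f : I → H} {A B : ℝ}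

theorem exists_finsupp_sum_smul_eq (f : I → H) (s : Finset I) (x : I → ℂ) :
    ∃ c : I →₀ ℂ, ∑ i ∈ c.support, c i • f i = ∑ i ∈ s, x i • f i ∧
      ∑ i ∈ c.support, ‖c i‖ ^ 2 = ∑ i ∈ s, ‖x i‖ ^ 2 := by
  classical
  exact ⟨Finsupp.indicator s fun i _ => x i,
    Finsupp.sum_indicator_index (s := s) x (h := fun i a => a • f i) fun _ _ => zero_smul ℂ _,
    Finsupp.sum_indicator_index (s := s) x (h := fun _ a => ‖a‖ ^ 2) fun _ _ => by simp⟩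

theorem RieszUpper.norm_sum_sq_le (hB : RieszUpper f B) (s : Finset I) (x : I → ℂ) :
    ‖∑ i ∈ s, x i • f i‖ ^ 2 ≤ B * ∑ i ∈ s, ‖x i‖ ^ 2 := by
  obtain ⟨c, hsum, hnorm⟩ := exists_finsupp_sum_smul_eq f s x
  simpa only [hsum, hnorm] using hB c

theorem RieszLower.le_norm_sum_sq (hA : RieszLower f A) (s : Finset I) (x : I → ℂ) :
    A * ∑ i ∈ s, ‖x i‖ ^ 2 ≤ ‖∑ i ∈ s, x i • f i‖ ^ 2 := by
  obtain ⟨c, hsum, hnorm⟩ := exists_finsupp_sum_smul_eq f s x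
  simpa only [hsum, hnorm] using hA c

theorem RieszUpper.norm_sq_le_of_hasSum (hB : RieszUpper f B) {x : ℓ²(I, ℂ)} {y : H}
    (hy : HasSum (fun i => x i • f i) y) : ‖y‖ ^ 2 ≤ B * ‖x‖ ^ 2 :=
  le_of_tendsto_of_tendsto' (hy.norm.pow 2) ((lp.hasSum_norm_sq x).const_mul B)
    (hB.norm_sum_sq_le · x)

theorem RieszLower.le_norm_sq_of_hasSum (hA : RieszLower f A) {x : ℓ²(I, ℂ)} {y : H}
    (hy : HasSum (fun i => x i • f i) y) : A * ‖x‖ ^ 2 ≤ ‖y‖ ^ 2 :=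
  le_of_tendsto_of_tendsto' ((lp.hasSum_norm_sq x).const_mul A) (hy.norm.pow 2)
    (hA.le_norm_sum_sq · x)

theorem ContinuousLinearEquiv.isRieszBasisFor_apply_single [DecidableEq I]
    (T : ℓ²(I, ℂ) ≃L[ℂ] H) : IsRieszBasisFor fun i => T (lp.single 2 i 1) := by
  set C := max 1 (max ‖(T : ℓ²(I, ℂ) →L[ℂ] H)‖ ‖(T.symm : H →L[ℂ] ℓ²(I, ℂ))‖)
  have hC : 1 ≤ C := le_max_left _ _
  have hTle : ∀ u, ‖T u‖ ≤ C * ‖u‖ := fun u => ((T : ℓ²(I, ℂ) →L[ℂ] H).le_opNorm u).trans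
    (by gcongr; exact le_max_of_le_right (le_max_left _ _))
  have hle : ∀ u, ‖u‖ ≤ C * ‖T u‖ := fun u => by
    simpa using ((T.symm : H →L[ℂ] ℓ²(I, ℂ)).le_opNorm (T u)).trans
      (by gcongr; exact le_max_of_le_right (le_max_right _ _))
  have hsum : ∀ c : I →₀ ℂ, ∑ i ∈ c.support, c i • T (lp.single 2 i 1) =
      T (∑ i ∈ c.support, lp.single 2 i (c i)) := fun c => by
    simp only [map_sum, ← map_smul, ← lp.single_smul, smul_eq_mul, mul_one]
  have hnorm : ∀ c : I →₀ ℂ,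
      ‖∑ i ∈ c.support, lp.single 2 i (c i)‖ ^ 2 = ∑ i ∈ c.support, ‖c i‖ ^ 2 := fun c => by
    simpa using lp.norm_sum_single (p := 2) (E := fun _ : I => ℂ) (by norm_num) c c.support
  refine ⟨⟨(C ^ 2)⁻¹, C ^ 2, by positivity, ?_, fun c => ?_, fun c => ?_⟩, ?_⟩
  · exact (inv_le_one_of_one_le₀ (one_le_pow₀ hC)).trans (one_le_pow₀ hC)
  · rw [hsum, ← hnorm, inv_mul_le_iff₀ (by positivity), ← mul_pow]
    exact pow_le_pow_left₀ (norm_nonneg _) (hle _) 2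
  · rw [hsum, ← hnorm, ← mul_pow]
    exact pow_le_pow_left₀ (norm_nonneg _) (hTle _) 2
  · rw [← Submodule.dense_iff_topologicalClosure_eq_top, Set.range_comp']
    exact (T.surjective.denseRange.dense_image T.continuous lp.dense_span_single).mono
      (Submodule.image_span_subset_span (T : ℓ²(I, ℂ) →ₗ[ℂ] H) _)

variable [CompleteSpace H]

theorem RieszUpper.summable_smul (hB : RieszUpper f B) (x : ℓ²(I, ℂ)) :
    Summable fun i => x i • f i := by
  rw [summable_iff_vanishing_norm]
  intro ε hε
  set B' := max B 1
  have hB' : 0 < B' := lt_max_of_lt_right one_pos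
  obtain ⟨s, hs⟩ := summable_iff_vanishing_norm.mp (lp.hasSum_norm_sq x).summable
    (ε ^ 2 / B') (by positivity)
  refine ⟨s, fun t ht => lt_of_pow_lt_pow_left₀ 2 hε.le ?_⟩
  have htail : ∑ i ∈ t, ‖x i‖ ^ 2 < ε ^ 2 / B' := by
    simpa only [Real.norm_of_nonneg (by positivity : 0 ≤ ∑ i ∈ t, ‖x i‖ ^ 2)] using hs t ht
  calc ‖∑ i ∈ t, x i • f i‖ ^ 2 ≤ B * ∑ i ∈ t, ‖x i‖ ^ 2 := hB.norm_sum_sq_le t x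
    _ ≤ B' * ∑ i ∈ t, ‖x i‖ ^ 2 := by gcongr; exact le_max_left B 1
    _ < B' * (ε ^ 2 / B') := by gcongr
    _ = ε ^ 2 := mul_div_cancel₀ _ hB'.ne'

theorem RieszUpper.exists_synthesis (hB : RieszUpper f B) (hB₀ : 0 ≤ B) :
    ∃ T : ℓ²(I, ℂ) →L[ℂ] H, ∀ x, HasSum (fun i => x i • f i) (T x) := by
  have hsum := hB.summable_smul
  let T : ℓ²(I, ℂ) →ₗ[ℂ] H :=
    { toFun := fun x => ∑' i, x i • f i
      map_add' := fun x y => by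
        simp only [lp.coeFn_add, Pi.add_apply, add_smul]
        exact (hsum x).tsum_add (hsum y)
      map_smul' := fun c x => by
        simp only [lp.coeFn_smul, Pi.smul_apply, smul_eq_mul, mul_smul, RingHom.id_apply]
        exact (hsum x).tsum_const_smul c }
  have hT : ∀ x, HasSum (fun i => x i • f i) (T x) := fun x => (hsum x).hasSum
  refine ⟨T.mkContinuous (√B) fun x => ?_, hT⟩
  refine (pow_le_pow_iff_left₀ (norm_nonneg _) (by positivity) two_ne_zero).1 ?_
  rw [mul_pow, Real.sq_sqrt hB₀]
  exact hB.norm_sq_le_of_hasSum (hT x)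

theorem IsRieszBasisFor.exists_synthesis_equiv (hf : IsRieszBasisFor f) :
    ∃ T : ℓ²(I, ℂ) ≃L[ℂ] H, ∀ x, HasSum (fun i => x i • f i) (T x) := by
  classical
  obtain ⟨⟨A, B, hA, hAB, hlow, hup⟩, hspan⟩ := hf
  obtain ⟨T, hT⟩ := hup.exists_synthesis (hA.le.trans hAB)
  have hbelow : ∀ x, ‖x‖ ≤ (√A)⁻¹ * ‖T x‖ := fun x => by
    rw [le_inv_mul_iff₀ (by positivity)]
    refine (pow_le_pow_iff_left₀ (by positivity) (norm_nonneg _) two_ne_zero).1 ?_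
    rw [mul_pow, Real.sq_sqrt hA.le]
    exact hlow.le_norm_sq_of_hasSum (hT x)
  have hanti := T.antilipschitz_of_bound (K := ⟨(√A)⁻¹, by positivity⟩) hbelow
  have hdense : DenseRange T := by
    refine (Submodule.dense_iff_topologicalClosure_eq_top.mpr hspan).mono ?_
    change _ ⊆ (LinearMap.range (T : ℓ²(I, ℂ) →ₗ[ℂ] H) : Set H)
    rw [SetLike.coe_subset_coe, Submodule.span_le, Set.range_subset_iff]
    exact fun i => ⟨lp.single 2 i 1, (hT _).unique (hasSum_lp_single_one_smul f i)⟩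
  refine ⟨.ofBijective T (LinearMap.ker_eq_bot.mpr hanti.injective)
    (LinearMap.range_eq_top.mpr (hanti.surjective_of_denseRange T.uniformContinuous hdense)), hT⟩

end Riesz

theorem rieszBasis_rdualIV_characterization_general
    {H : Type*} [NormedAddCommGroup H] [InnerProductSpace ℂ H] [CompleteSpace H]
    {I : Type*}
    (f : I → H)
    (hf : IsRieszBasisFor f)
    (ω : I → H) :
    (∃ e hb : I → H, IsRieszBasisFor e ∧ IsRieszBasisFor hb ∧
        (∀ j, Summable fun i => ‖⟪f i, e j⟫‖ ^ 2) ∧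
        ∀ j, HasSum (fun i => ⟪f i, e j⟫ • hb i) (ω j)) ↔
      IsRieszBasisFor ω := by
  classical
  obtain ⟨F, hF⟩ := hf.exists_synthesis_equiv
  have hcoord : ∀ y i, F.adjoint y i = ⟪f i, y⟫ := adjoint_apply_apply_of_hasSum hF
  constructor
  · rintro ⟨e, h, he, hh, -, hsum⟩
    obtain ⟨E, hE⟩ := he.exists_synthesis_equiv
    obtain ⟨V, hV⟩ := hh.exists_synthesis_equiv
    have hωV : ∀ j, ω j = (E.trans (F.adjoint.trans V)) (lp.single 2 j 1) := fun j => by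
      have hEj : E (lp.single 2 j 1) = e j := (hE _).unique (hasSum_lp_single_one_smul e j)
      refine (hsum j).unique ?_
      simpa only [ContinuousLinearEquiv.trans_apply, hEj, hcoord] using hV (F.adjoint (e j))
    simpa only [← hωV] using (E.trans (F.adjoint.trans V)).isRieszBasisFor_apply_single
  · intro hω
    have hbiorth : ∀ i j, ⟪f i, F.adjoint.symm (lp.single 2 j 1)⟫ =
        (lp.single 2 j 1 : ℓ²(I, ℂ)) i :=
      fun i j => by rw [← hcoord, ContinuousLinearEquiv.apply_symm_apply]
    refine ⟨fun j => F.adjoint.symm (lp.single 2 j 1), ω,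
      F.adjoint.symm.isRieszBasisFor_apply_single, hω, fun j => ?_, fun j => ?_⟩
    · simpa only [hbiorth] using (lp.hasSum_norm_sq (lp.single 2 j 1)).summable
    · simpa only [hbiorth] using hasSum_lp_single_one_smul ω j

/-- for a Riesz basis `f`, the R-duals of type IV of `f` (with respect to
pairs of Riesz bases) are precisely the Riesz bases for `H`. -/
theorem rieszBasis_rdualIV_characterization
    {H : Type*} [NormedAddCommGroup H] [InnerProductSpace ℂ H] [CompleteSpace H]
    {I : Type*} [Countable I]
    (f : I → H)
    (hf : IsRieszBasisFor f)
    (ω : I → H) :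
    (∃ e hb : I → H, IsRieszBasisFor e ∧ IsRieszBasisFor hb ∧
        (∀ j, Summable fun i => ‖⟪f i, e j⟫‖ ^ 2) ∧
        ∀ j, HasSum (fun i => ⟪f i, e j⟫ • hb i) (ω j)) ↔
      IsRieszBasisFor ω :=
  rieszBasis_rdualIV_characterization_general f hf ω

end
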